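/- arXiv:2406.10963 — 3 statements merged into one kernel-verified Lean document; each statement's English description precedes it below -/
import Mathlib

section
/- Let k be a positive integer, t a positive real number, and z a complex number with |z| > 1. Then |z + t·z(z^k − 1)/(z^k + 1)| > |z|; in particular |z + t·z(z^k − 1)/(z^k + 1)| > 1. (Note that z^k + 1 ≠ 0 since |z| > 1.) -/
/-! Writing `w = z ^ k`, the ray point is `z * (1 + t * (w - 1) / (w + 1))`. The Cayley transform
`w ↦ (w - 1) / (w + 1)` sends the exterior of the unit disk into the right half-plane, and adding a
vector with positive real part to `1` lands outside the unit disk. -/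

namespace Complex

theorem re_sub_one_div_add_one_pos {w : ℂ} (hw : 1 < ‖w‖) : 0 < ((w - 1) / (w + 1)).re := by
  have hw1 : w + 1 ≠ 0 := by
    rintro h
    rw [eq_neg_of_add_eq_zero_left h, norm_neg, norm_one] at hw
    exact lt_irrefl 1 hw
  have hnum : (w - 1).re * (w + 1).re + (w - 1).im * (w + 1).im = normSq w - 1 := by
    simp only [sub_re, add_re, sub_im, add_im, one_re, one_im, normSq_apply]
    ring
  have hnormSq : 1 < normSq w := by
    rw [← Complex.sq_norm]
    exact one_lt_pow₀ hw two_ne_zero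
  rw [div_re, ← add_div, hnum]
  exact div_pos (sub_pos.mpr hnormSq) (normSq_pos.mpr hw1)

theorem one_lt_norm_one_add_of_re_pos {u : ℂ} (hu : 0 < u.re) : 1 < ‖1 + u‖ :=
  calc (1 : ℝ) < (1 + u).re := by simpa using hu
    _ ≤ ‖1 + u‖ := re_le_norm _

end Complex

open Complex in
theorem stmt0 (k : ℕ) (hk : 1 ≤ k) (t : ℝ) (ht : 0 < t) (z : ℂ)
    (hz : 1 < ‖z‖) :
    ‖z‖ < ‖z + (t : ℂ) * (z * (z ^ k - 1) / (z ^ k + 1))‖ ∧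
    1 < ‖z + (t : ℂ) * (z * (z ^ k - 1) / (z ^ k + 1))‖ := by
  have hzk : 1 < ‖z ^ k‖ := by
    rw [norm_pow]
    exact one_lt_pow₀ hz (Nat.one_le_iff_ne_zero.mp hk)
  have hfactor : z + (t : ℂ) * (z * (z ^ k - 1) / (z ^ k + 1))
      = z * (1 + t * ((z ^ k - 1) / (z ^ k + 1))) := by
    ring
  have hgrow : 1 < ‖1 + t * ((z ^ k - 1) / (z ^ k + 1))‖ := by
    apply one_lt_norm_one_add_of_re_pos
    rw [re_ofReal_mul]
    exact mul_pos ht (re_sub_one_div_add_one_pos hzk)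
  have hmain : ‖z‖ < ‖z + (t : ℂ) * (z * (z ^ k - 1) / (z ^ k + 1))‖ := by
    rw [hfactor, norm_mul]
    exact lt_mul_of_one_lt_right (zero_lt_one.trans hz) hgrow
  exact ⟨hmain, hz.trans hmain⟩
end

section
/- Let R be a complex rational function, u ∈ ℂ, and z₀ a point with z₀ ≠ u, z₀ not a pole of R, R(z₀)/(u − z₀) a positive real number, and R(z₀) + (u − z₀)·R′(z₀) ≠ 0. Then the level set {z : Im(R(z)/(u − z)) = 0} is, near z₀, a smooth curve whose tangent direction at z₀ is spanned by the complex number R(z₀)²/(R(z₀) + (u − z₀)R′(z₀)). -/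
open Metric Set Filter
open scoped Topology

private lemma analyticAt_strictDeriv {f : ℂ → ℂ} {x : ℂ} (h : AnalyticAt ℂ f x) :
    HasStrictDerivAt f (deriv f x) x := by
  obtain ⟨p, hp⟩ := h
  have h1 := hp.hasStrictDerivAt
  rwa [h1.hasDerivAt.deriv]

theorem stmt10 (P Q : Polynomial ℂ) (R : ℂ → ℂ)
    (hR : R = fun z => P.eval z / Q.eval z)
    (u z₀ : ℂ) (hz : z₀ ≠ u) (hQ : Q.eval z₀ ≠ 0)
    (hpos : ∃ s : ℝ, 0 < s ∧ R z₀ / (u - z₀) = (s : ℂ))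
    (hnz : R z₀ + (u - z₀) * deriv R z₀ ≠ 0) :
    ∃ U ∈ nhds z₀, ∃ γ : ℝ → ℂ, ∃ ε : ℝ, 0 < ε ∧
      ContDiff ℝ (⊤ : ℕ∞) γ ∧ γ 0 = z₀ ∧ Set.InjOn γ (Set.Ioo (-ε) ε) ∧
      {z ∈ U | (R z / (u - z)).im = 0} = γ '' Set.Ioo (-ε) ε ∧
      ∃ c : ℝ, c ≠ 0 ∧
        deriv γ 0 = (c : ℂ) * (R z₀ ^ 2 / (R z₀ + (u - z₀) * deriv R z₀)) := by
  obtain ⟨s, hs, hsval⟩ := hpos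
  have huz : u - z₀ ≠ 0 := sub_ne_zero.mpr (Ne.symm hz)
  set F : ℂ → ℂ := fun z => R z / (u - z) with hFdef
  set V : Set ℂ := {z | Q.eval z ≠ 0 ∧ u - z ≠ 0} with hVdef
  have hVopen : IsOpen V := by
    have h1 : IsOpen {z : ℂ | Q.eval z ≠ 0} := isOpen_compl_singleton.preimage Q.continuous
    have h2 : IsOpen {z : ℂ | u - z ≠ 0} :=
      isOpen_compl_singleton.preimage (continuous_const.sub continuous_id)
    exact h1.inter h2
  have hz₀V : z₀ ∈ V := ⟨hQ, huz⟩
  have hRdiff : ∀ z : ℂ, Q.eval z ≠ 0 → DifferentiableAt ℂ R z := by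
    intro z hzq
    rw [hR]
    exact P.differentiableAt.div Q.differentiableAt hzq
  have hFdiffAt : ∀ z ∈ V, DifferentiableAt ℂ F z := by
    intro z hzV
    exact (hRdiff z hzV.1).div ((differentiableAt_const u).sub differentiableAt_id) hzV.2
  have hFdiff : DifferentiableOn ℂ F V := fun z hz => (hFdiffAt z hz).differentiableWithinAt
  have hFa : AnalyticOnNhd ℂ F V := hFdiff.analyticOnNhd hVopen
  -- derivative of F at z₀
  have hRd : HasDerivAt R (deriv R z₀) z₀ := (hRdiff z₀ hQ).hasDerivAt
  have hud : HasDerivAt (fun z : ℂ => u - z) (-1 : ℂ) z₀ := by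
    simpa using (hasDerivAt_id z₀).const_sub u
  set d0 : ℂ := (R z₀ + (u - z₀) * deriv R z₀) / (u - z₀) ^ 2 with hd0def
  have hF0 : HasDerivAt F d0 z₀ := by
    have := hRd.div hud huz
    refine this.congr_deriv ?_
    rw [hd0def]; ring
  have hd0ne : d0 ≠ 0 := div_ne_zero hnz (pow_ne_zero 2 huz)
  have hderivF : deriv F z₀ = d0 := hF0.deriv
  have hs0 : HasStrictDerivAt F d0 z₀ := by
    have h1 := analyticAt_strictDeriv (hFa z₀ hz₀V)
    rwa [hderivF] at h1
  -- inverse function theorem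
  set e : OpenPartialHomeomorph ℂ ℂ := (hs0.hasStrictFDerivAt_equiv hd0ne).toOpenPartialHomeomorph F
    with hedef
  have hecoe : ⇑e = F := rfl
  have hz₀e : z₀ ∈ e.source :=
    (hs0.hasStrictFDerivAt_equiv hd0ne).mem_toOpenPartialHomeomorph_source
  set g : ℂ → ℂ := ⇑e.symm with hgdef
  have hFz₀ : F z₀ = (s : ℂ) := hsval
  have hse : (s : ℂ) ∈ e.target := by
    have := e.map_source hz₀e
    rwa [hecoe, hFz₀] at this
  have hgs : g (s : ℂ) = z₀ := by
    have := e.left_inv hz₀e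
    rw [hecoe, hFz₀] at this
    exact this
  -- the open set where things are nice
  have hdFa : AnalyticOnNhd ℂ (deriv F) V := hFa.deriv
  set W : Set ℂ := e.source ∩ (V ∩ deriv F ⁻¹' {(0 : ℂ)}ᶜ) with hWdef
  have hWopen : IsOpen W :=
    e.open_source.inter (hdFa.continuousOn.isOpen_inter_preimage hVopen isOpen_compl_singleton)
  have hz₀W : z₀ ∈ W := ⟨hz₀e, hz₀V, by simp [hderivF, hd0ne]⟩
  have hgc : ContinuousAt g (s : ℂ) := e.symm.continuousAt (by rwa [e.symm_source])
  obtain ⟨δ1, hδ1, hball⟩ : ∃ δ1 > 0, ball (s : ℂ) δ1 ⊆ e.target ∩ g ⁻¹' W := by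
    have h1 : e.target ∩ g ⁻¹' W ∈ 𝓝 ((s : ℂ)) :=
      inter_mem (e.open_target.mem_nhds hse) (hgc.preimage_mem_nhds (hWopen.mem_nhds (by rw [hgs]; exact hz₀W)))
    obtain ⟨r, hr, hrs⟩ := Metric.mem_nhds_iff.mp h1
    exact ⟨r, hr, hrs⟩
  -- g is holomorphic on the ball
  have hgd : ∀ w ∈ ball (s : ℂ) δ1, HasStrictDerivAt g (deriv F (g w))⁻¹ w := by
    intro w hw
    obtain ⟨hwt, hgws, hgwV, hgw0⟩ := hball hw
    have hstr : HasStrictDerivAt F (deriv F (g w)) (g w) := analyticAt_strictDeriv (hFa _ hgwV)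
    have hinv : ∀ᶠ x in 𝓝 (g w), g (F x) = x := by
      filter_upwards [e.open_source.mem_nhds hgws] with x hx
      rw [← hecoe]
      exact e.left_inv hx
    have h2 := hstr.to_local_left_inverse hgw0 hinv
    have h3 : F (g w) = w := e.right_inv hwt
    rwa [h3] at h2
  have hgdiff : DifferentiableOn ℂ g (ball (s : ℂ) δ1) := fun w hw =>
    ((hgd w hw).hasDerivAt.differentiableAt).differentiableWithinAt
  have hgsmooth : ContDiffOn ℝ (⊤ : ℕ∞) g (ball (s : ℂ) δ1) :=
    (hgdiff.contDiffOn isOpen_ball).restrict_scalars ℝ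
  -- the squashing map
  set m : ℝ → ℝ := fun t => δ1 * t / (1 + t ^ 2) with hmdef
  have hmder : ∀ t : ℝ, HasDerivAt m (δ1 * (1 - t ^ 2) / (1 + t ^ 2) ^ 2) t := by
    intro t
    have h1 : HasDerivAt (fun t : ℝ => δ1 * t) δ1 t := by
      simpa using (hasDerivAt_id t).const_mul δ1
    have h2 : HasDerivAt (fun t : ℝ => 1 + t ^ 2) (2 * t) t := by
      simpa using (hasDerivAt_pow 2 t).const_add 1
    have h3 := h1.div h2 (by positivity)
    refine h3.congr_deriv ?_
    ring
  have hmcont : Continuous m := by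
    rw [hmdef]
    exact (continuous_const.mul continuous_id).div
      (continuous_const.add (continuous_pow 2)) (fun t => by positivity)
  have hmsmooth : ContDiff ℝ (⊤ : ℕ∞) m := by
    rw [hmdef]
    exact (contDiff_const.mul contDiff_id).div
      (contDiff_const.add (contDiff_id.pow 2)) (fun t => by positivity)
  have hmbound : ∀ t : ℝ, |m t| < δ1 := by
    intro t
    rw [hmdef]
    simp only
    rw [abs_div, abs_of_pos (by positivity : (0:ℝ) < 1 + t ^ 2), abs_mul,
      abs_of_pos hδ1, div_lt_iff₀ (by positivity)]
    nlinarith [sq_nonneg (|t| - 1), sq_abs t]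
  have hmono : StrictMonoOn m (Icc (-(1/2) : ℝ) (1/2)) := by
    apply strictMonoOn_of_deriv_pos (convex_Icc _ _) hmcont.continuousOn
    intro t ht
    rw [interior_Icc] at ht
    rw [(hmder t).deriv]
    have h1 : t ^ 2 < 1 := by nlinarith [ht.1, ht.2]
    have h2 : (0:ℝ) < 1 - t ^ 2 := by linarith
    positivity
  set δ2 : ℝ := m (1/2) with hδ2def
  have hδ2pos : 0 < δ2 := by rw [hδ2def, hmdef]; positivity
  have hδ2lt : δ2 < δ1 := by
    have := hmbound (1/2)
    rw [abs_of_pos hδ2pos] at this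
    exact this
  have hmodd : m (-(1/2)) = -δ2 := by rw [hδ2def, hmdef]; simp only; ring
  -- the curve
  set γ : ℝ → ℂ := fun t => g ((s : ℂ) + ((m t : ℝ) : ℂ)) with hγdef
  set U : Set ℂ := e.source ∩ F ⁻¹' ball (s : ℂ) δ2 with hUdef
  have hUnhds : U ∈ 𝓝 z₀ := by
    apply inter_mem (e.open_source.mem_nhds hz₀e)
    have h1 : ContinuousAt F z₀ := (hFdiffAt z₀ hz₀V).continuousAt
    have h2 : ball (s : ℂ) δ2 ∈ 𝓝 (F z₀) := by
      rw [hFz₀]; exact ball_mem_nhds _ hδ2pos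
    exact h1.preimage_mem_nhds h2
  have hmem_ball : ∀ t : ℝ, (s : ℂ) + ((m t : ℝ) : ℂ) ∈ ball (s : ℂ) δ1 := by
    intro t
    rw [mem_ball, Complex.dist_eq, add_sub_cancel_left, Complex.norm_real, Real.norm_eq_abs]
    exact hmbound t
  have hγsmooth : ContDiff ℝ (⊤ : ℕ∞) γ := by
    have hψ : ContDiff ℝ (⊤ : ℕ∞) (fun t : ℝ => (s : ℂ) + ((m t : ℝ) : ℂ)) :=
      contDiff_const.add (Complex.ofRealCLM.contDiff.comp hmsmooth)
    exact hgsmooth.comp_contDiff hψ hmem_ball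
  have hγ0 : γ 0 = z₀ := by
    rw [hγdef]
    simp only [hmdef]
    norm_num
    exact hgs
  -- injectivity
  have hmemt : ∀ t : ℝ, (s : ℂ) + ((m t : ℝ) : ℂ) ∈ e.target := fun t =>
    (hball (hmem_ball t)).1
  have hγinj : Set.InjOn γ (Set.Ioo (-(1/2) : ℝ) (1/2)) := by
    intro t ht t' ht' heq
    rw [hγdef] at heq
    have h1 := e.symm.injOn (by rw [e.symm_source]; exact hmemt t)
      (by rw [e.symm_source]; exact hmemt t') heq
    have h2 : m t = m t' := by
      have := add_left_cancel h1
      exact_mod_cast this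
    exact hmono.injOn (Ioo_subset_Icc_self ht) (Ioo_subset_Icc_self ht') h2
  -- set equality
  have hmlt : ∀ t ∈ Ioo (-(1/2) : ℝ) (1/2), |m t| < δ2 := by
    intro t ht
    rw [abs_lt, ← hmodd]
    constructor
    · exact hmono (left_mem_Icc.mpr (by norm_num)) (Ioo_subset_Icc_self ht) ht.1
    · exact hmono (Ioo_subset_Icc_self ht) (right_mem_Icc.mpr (by norm_num)) ht.2
  have hseteq : {z ∈ U | (F z).im = 0} = γ '' Set.Ioo (-(1/2) : ℝ) (1/2) := by
    ext z
    constructor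
    · rintro ⟨⟨hze, hzb⟩, hzim⟩
      have hzball : F z ∈ ball (s : ℂ) δ2 := hzb
      set t' : ℝ := (F z).re - s with ht'def
      have hFzeq : F z = (s : ℂ) + ((t' : ℝ) : ℂ) := by
        apply Complex.ext <;> simp [ht'def, hzim]
      have ht'lt : |t'| < δ2 := by
        rw [mem_ball, Complex.dist_eq, hFzeq, add_sub_cancel_left, Complex.norm_real, Real.norm_eq_abs] at hzball
        exact hzball
      have ht'mem : t' ∈ Ioo (m (-(1/2) : ℝ)) (m (1/2)) := by
        rw [hmodd, ← hδ2def]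
        exact abs_lt.mp ht'lt
      obtain ⟨t, ht, hmt⟩ := intermediate_value_Ioo (by norm_num : (-(1/2) : ℝ) ≤ 1/2)
        hmcont.continuousOn ht'mem
      refine ⟨t, ht, ?_⟩
      rw [hγdef]
      simp only
      rw [hmt, ← hFzeq, ← hecoe]
      exact e.left_inv hze
    · rintro ⟨t, ht, rfl⟩
      have hwt := hmemt t
      have hγe : γ t ∈ e.source := e.map_target hwt
      have hFγ : F (γ t) = (s : ℂ) + ((m t : ℝ) : ℂ) := e.right_inv hwt
      refine ⟨⟨hγe, ?_⟩, ?_⟩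
      · show F (γ t) ∈ ball (s : ℂ) δ2
        rw [hFγ, mem_ball, Complex.dist_eq, add_sub_cancel_left, Complex.norm_real, Real.norm_eq_abs]
        exact hmlt t ht
      · show (F (γ t)).im = 0
        rw [hFγ]
        simp
  -- derivative
  have hψd : HasDerivAt (fun t : ℝ => (s : ℂ) + ((m t : ℝ) : ℂ)) ((δ1 : ℝ) : ℂ) 0 := by
    have h1 : HasDerivAt m δ1 0 := by
      have := hmder 0
      norm_num at this
      exact this
    have h2 : HasDerivAt (fun t : ℝ => ((m t : ℝ) : ℂ)) ((δ1 : ℝ) : ℂ) 0 := by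
      have h3 := Complex.ofRealCLM.hasFDerivAt.comp_hasDerivAt 0 h1
      simp at h3
      exact h3
    simpa using h2.const_add ((s : ℝ) : ℂ)
  have hgds : HasDerivAt g d0⁻¹ ((s : ℝ) : ℂ) := by
    have h1 := (hgd _ (mem_ball_self hδ1)).hasDerivAt
    rwa [hgs, hderivF] at h1
  have hγd : HasDerivAt γ (((δ1 : ℝ) : ℂ) * d0⁻¹) 0 := by
    have h3 := (hgds.hasFDerivAt.restrictScalars ℝ).comp_hasDerivAt_of_eq 0 hψd
      (by simp [hmdef])
    simp [Function.comp, smul_eq_mul, mul_comm] at h3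
    exact h3
  refine ⟨U, hUnhds, γ, 1/2, by norm_num, hγsmooth, hγ0, hγinj, hseteq, δ1 / s ^ 2, ?_, ?_⟩
  · positivity
  · rw [hγd.deriv]
    have hR0 : R z₀ = (s : ℂ) * (u - z₀) := by
      rwa [div_eq_iff huz] at hsval
    have hsne : (s : ℂ) ≠ 0 := Complex.ofReal_ne_zero.mpr (ne_of_gt hs)
    have hN : (s : ℂ) * (u - z₀) + (u - z₀) * deriv R z₀ ≠ 0 := by
      rw [← hR0]; exact hnz
    rw [hd0def, hR0]
    push_cast
    field_simp
end

section
/- Let P, Q be complex polynomials with P not identically zero, u ∈ ℂ, and suppose deg Q ≤ deg P. Then there exists a constant M > 0 such that for every t ≥ 0, every complex root z of the polynomial t·Q(z) + (z − u)·P(z) satisfies |z| ≤ M·(1 + t). -/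
/-! The polynomial `t • Q + (X - u) * P` has the leading coefficient of `P` in degree
`deg P + 1`, while its other coefficients grow at most linearly in `t`. Cauchy's bound
`1 + max |aᵢ| / |aₙ|` on the roots is therefore affine in `t`. -/

open Polynomial NNReal

namespace Polynomial

variable {K : Type*} [NormedDivisionRing K]

lemma exists_norm_coeff_le (p : K[X]) : ∃ B : ℝ, 0 ≤ B ∧ ∀ i, ‖p.coeff i‖ ≤ B := by
  refine ⟨∑ i ∈ p.support, ‖p.coeff i‖, by positivity, fun i => ?_⟩
  by_cases hi : i ∈ p.support
  · exact Finset.single_le_sum (f := fun i => ‖p.coeff i‖) (fun _ _ => norm_nonneg _) hi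
  · rw [notMem_support_iff.mp hi, norm_zero]
    positivity

lemma cauchyBound_le_of_norm_coeff_le (p : K[X]) {B : ℝ} (hB : 0 ≤ B)
    (h : ∀ i < p.natDegree, ‖p.coeff i‖ ≤ B) :
    (p.cauchyBound : ℝ) ≤ B / ‖p.leadingCoeff‖ + 1 := by
  have hsup : (((Finset.range p.natDegree).sup (‖p.coeff ·‖₊) : ℝ≥0) : ℝ) ≤ B := by
    rw [← Real.coe_toNNReal B hB, NNReal.coe_le_coe, Finset.sup_le_iff]
    intro i hi
    rw [← NNReal.coe_le_coe, Real.coe_toNNReal B hB, coe_nnnorm]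
    exact h i (Finset.mem_range.mp hi)
  rw [cauchyBound]
  push_cast [coe_nnnorm]
  gcongr

lemma norm_le_of_isRoot_of_norm_coeff_le {p : K[X]} (hp : p ≠ 0) {a : K} (ha : p.IsRoot a)
    {B : ℝ} (hB : 0 ≤ B) (h : ∀ i < p.natDegree, ‖p.coeff i‖ ≤ B) :
    ‖a‖ ≤ B / ‖p.leadingCoeff‖ + 1 :=
  calc ‖a‖ ≤ p.cauchyBound := mod_cast (ha.norm_lt_cauchyBound hp).le
    _ ≤ B / ‖p.leadingCoeff‖ + 1 := cauchyBound_le_of_norm_coeff_le p hB h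

theorem exists_norm_root_le_mul_one_add_norm {Q S : K[X]} (hdeg : Q.natDegree < S.natDegree) :
    ∃ M : ℝ, 0 < M ∧ ∀ (c : K) (z : K), (C c * Q + S).IsRoot z → ‖z‖ ≤ M * (1 + ‖c‖) := by
  obtain ⟨bQ, hbQ, hQ⟩ := exists_norm_coeff_le Q
  obtain ⟨bS, hbS, hS⟩ := exists_norm_coeff_le S
  have hS0 : S ≠ 0 := ne_zero_of_natDegree_gt hdeg
  set L := ‖S.leadingCoeff‖
  have hL : 0 < L := norm_pos_iff.mpr (leadingCoeff_ne_zero.mpr hS0)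
  refine ⟨(bQ + bS) / L + 1, by positivity, fun c z hz => ?_⟩
  have hlt : (C c * Q).natDegree < S.natDegree := (natDegree_C_mul_le c Q).trans_lt hdeg
  have hlead : (C c * Q + S).leadingCoeff = S.leadingCoeff :=
    leadingCoeff_add_of_degree_lt (degree_lt_degree hlt)
  have hR0 : C c * Q + S ≠ 0 := fun h =>
    leadingCoeff_ne_zero.mpr hS0 (by rw [← hlead, h, leadingCoeff_zero])
  have hcoeff : ∀ i, ‖(C c * Q + S).coeff i‖ ≤ ‖c‖ * bQ + bS := fun i =>
    calc ‖(C c * Q + S).coeff i‖ ≤ ‖c‖ * ‖Q.coeff i‖ + ‖S.coeff i‖ := by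
          rw [coeff_add, coeff_C_mul, ← norm_mul]
          exact norm_add_le _ _
      _ ≤ ‖c‖ * bQ + bS := by gcongr; exacts [hQ i, hS i]
  have hz' := norm_le_of_isRoot_of_norm_coeff_le hR0 hz (by positivity) fun i _ => hcoeff i
  rw [hlead] at hz'
  refine hz'.trans ?_
  rw [add_div, add_div, mul_div_assoc]
  nlinarith [norm_nonneg c, div_nonneg hbQ hL.le, mul_nonneg (norm_nonneg c) (div_nonneg hbS hL.le)]

end Polynomial

theorem stmt16 (P Q : Polynomial ℂ) (hP : P ≠ 0) (hdeg : Q.natDegree ≤ P.natDegree)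
    (u : ℂ) :
    ∃ M : ℝ, 0 < M ∧ ∀ t : ℝ, 0 ≤ t → ∀ z : ℂ,
      (t : ℂ) * Q.eval z + (z - u) * P.eval z = 0 →
      ‖z‖ ≤ M * (1 + t) := by
  have hdegS : Q.natDegree < ((X - C u) * P).natDegree := by
    rw [natDegree_mul (X_sub_C_ne_zero u) hP, natDegree_X_sub_C]
    omega
  obtain ⟨M, hM, hroot⟩ := exists_norm_root_le_mul_one_add_norm hdegS
  refine ⟨M, hM, fun t ht z hz => ?_⟩
  have := hroot t z (by simpa using hz)
  rwa [Complex.norm_real, Real.norm_of_nonneg ht] at this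
end
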